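/- Let α > 0 and let q_1 > q_2 > q_3 be real numbers. Then there exist positive masses m_1, m_2, m_3 > 0 and λ < 0 such that q is a central configuration: λ m_j (q_j − q_0) = −α ∑_{k≠j} m_j m_k Q_{jk} for j = 1, 2, 3, where q_0 = (∑_j m_j q_j)/(∑_j m_j). -/

import Mathlib

/-!
Take `λ = -α μ` with `μ > 0`. Dividing the `j`-th equation by `m j`, it says that the force
vector `F = Q *ᵥ m` equals `μ (q - q₀)`. Since `Q` is antisymmetric, `∑ j, m j * F j = 0`, so it
suffices that `F - μ q` be constant, i.e. that `F₀ - F₁ = μ (q₀ - q₁)` and `F₁ - F₂ = μ (q₁ - q₂)`.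
This is a linear system in `m` whose columns are `(A, C - A)`, `(A, B)`, `(C - B, B)` with
`A = Q₀₁`, `B = Q₁₂`, `C = Q₀₂`. As `x ↦ x ^ (-α - 1)` decreases, `0 < C < A, B`, so these columns
span a cone containing the open positive quadrant, and Cramer's rule yields positive masses.
-/

open Finset Matrix

section CentralConfiguration

variable {ι : Type*} [Fintype ι]

theorem Matrix.dotProduct_mulVec_self_of_transpose_eq_neg {R : Type*} [CommRing R]
    [IsAddTorsionFree R] {Q : Matrix ι ι R} (hQ : Qᵀ = -Q) (m : ι → R) :
    m ⬝ᵥ (Q *ᵥ m) = 0 := by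
  refine self_eq_neg.mp ?_
  calc m ⬝ᵥ (Q *ᵥ m) = (Qᵀ *ᵥ m) ⬝ᵥ m := by
        rw [dotProduct_mulVec, mulVec_transpose]
    _ = -(m ⬝ᵥ (Q *ᵥ m)) := by rw [hQ, neg_mulVec, neg_dotProduct, dotProduct_comm]

theorem sum_erase_mul_mul_eq_mul_mulVec {R : Type*} [CommSemiring R] [DecidableEq ι]
    {Q : Matrix ι ι R} {i : ι} (hQ : Q i i = 0) (m : ι → R) :
    ∑ k ∈ univ.erase i, m i * m k * Q i k = m i * (Q *ᵥ m) i := by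
  rw [sum_erase _ (by rw [hQ, mul_zero]), mulVec, dotProduct, mul_sum]
  exact sum_congr rfl fun k _ => by ring

noncomputable def centerOfMass (m q : ι → ℝ) : ℝ := (∑ k, m k * q k) / ∑ k, m k

theorem mulVec_eq_smul_sub_centerOfMass {Q : Matrix ι ι ℝ} (hQ : Qᵀ = -Q) {m q : ι → ℝ}
    (hm : ∑ k, m k ≠ 0) {μ d : ℝ} (h : ∀ j, (Q *ᵥ m) j = μ * q j + d) (j : ι) :
    (Q *ᵥ m) j = μ * (q j - centerOfMass m q) := by
  have hsum : μ * ∑ k, m k * q k + d * ∑ k, m k = 0 := by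
    rw [← dotProduct_mulVec_self_of_transpose_eq_neg hQ m, dotProduct, mul_sum, mul_sum,
      ← sum_add_distrib]
    exact sum_congr rfl fun k _ => by rw [h k]; ring
  have hd : d = -μ * centerOfMass m q := by
    rw [centerOfMass]; field_simp; linarith
  rw [h j, hd]; ring

end CentralConfiguration

theorem strictAntiOn_mul_abs_rpow {p : ℝ} (hp : p < -1) :
    StrictAntiOn (fun x : ℝ => x * |x| ^ p) (Set.Ioi 0) := by
  refine (Real.strictAntiOn_rpow_Ioi_of_exponent_neg (r := p + 1) (by linarith)).congr
    fun x (hx : 0 < x) => ?_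
  rw [abs_of_pos hx]
  exact (Real.rpow_add hx p 1).trans (by rw [Real.rpow_one, mul_comm])

theorem exists_masses_mulVec_eq_smul_add_const {Q : Matrix (Fin 3) (Fin 3) ℝ} (hQ : Qᵀ = -Q)
    (hC : 0 < Q 0 2) (hCA : Q 0 2 < Q 0 1) (hCB : Q 0 2 < Q 1 2) {q : Fin 3 → ℝ}
    (hq : StrictAnti q) :
    ∃ m : Fin 3 → ℝ, (∀ k, 0 < m k) ∧ ∃ μ > 0, ∃ d, ∀ j, (Q *ᵥ m) j = μ * q j + d := by
  set A := Q 0 1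
  set B := Q 1 2
  set C := Q 0 2
  have hQ3 : Q = !![0, A, C; -A, 0, B; -C, -B, 0] := by
    have hneg : ∀ i j, Q j i = -Q i j := fun i j => congrFun (congrFun hQ i) j
    have hdiag : ∀ i, Q i i = 0 := fun i => self_eq_neg.mp (hneg i i)
    ext i j
    fin_cases i <;> fin_cases j <;> simp [A, B, C, hdiag, hneg 0 1, hneg 0 2, hneg 1 2]
  have ha : 0 < q 0 - q 1 := sub_pos.mpr (hq (by decide))
  have hb : 0 < q 1 - q 2 := sub_pos.mpr (hq (by decide))
  have hA : 0 < A := hC.trans hCA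
  have hB : 0 < B := hC.trans hCB
  set S := (q 0 - q 1) * B + (q 1 - q 2) * (B - C)
  set T := (q 1 - q 2) * A + (q 0 - q 1) * (A - C)
  have hS : 0 < S := add_pos (mul_pos ha hB) (mul_pos hb (sub_pos.mpr hCB))
  have hT : 0 < T := add_pos (mul_pos hb hA) (mul_pos ha (sub_pos.mpr hCA))
  -- `C • (A, B) = B • (A, C - A) + A • (C - B, B)` and
  -- `C (A + B - C) • (q 0 - q 1, q 1 - q 2) = S • (A, C - A) + T • (C - B, B)`.
  refine ⟨![A * S ^ 2, C * S * T, B * T ^ 2], ?_, (A * S + B * T) * C * (A + B - C), ?_,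
    A * C * S * T + B * C * T ^ 2 - (A * S + B * T) * C * (A + B - C) * q 0, ?_⟩
  · intro k
    fin_cases k <;> simp <;> positivity
  · have : 0 < A + B - C := by linarith
    have := add_pos (mul_pos hA hS) (mul_pos hB hT)
    positivity
  · intro j
    rw [hQ3]
    fin_cases j <;> simp [mulVec, dotProduct, Fin.sum_univ_three, S, T] <;> ring

theorem stmt18 (α : ℝ) (hα : 0 < α)
    (q : Fin 3 → ℝ) (hq : StrictAnti q)
    (Q : Matrix (Fin 3) (Fin 3) ℝ)
    (hQ : ∀ i j, Q i j = (q i - q j) * |q i - q j| ^ (-α - 2)) :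
    ∃ (m : Fin 3 → ℝ) (lam : ℝ), (∀ k, 0 < m k) ∧ lam < 0 ∧
      ∀ i, lam * m i * (q i - (∑ k, m k * q k) / (∑ k, m k)) =
        -α * ∑ k ∈ Finset.univ.erase i, m i * m k * Q i k := by
  have hanti : Qᵀ = -Q := by
    ext i j
    rw [transpose_apply, neg_apply, hQ, hQ, ← neg_sub (q i), abs_neg, neg_mul]
  have hdecr := strictAntiOn_mul_abs_rpow (p := -α - 2) (by linarith)
  have h01 : 0 < q 0 - q 1 := sub_pos.mpr (hq (by decide))
  have h12 : 0 < q 1 - q 2 := sub_pos.mpr (hq (by decide))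
  have h02 : 0 < q 0 - q 2 := by linarith
  have hC : 0 < Q 0 2 := by rw [hQ]; positivity
  have hCA : Q 0 2 < Q 0 1 := by rw [hQ, hQ]; exact hdecr h01 h02 (by linarith)
  have hCB : Q 0 2 < Q 1 2 := by rw [hQ, hQ]; exact hdecr h12 h02 (by linarith)
  obtain ⟨m, hm, μ, hμ, d, hd⟩ := exists_masses_mulVec_eq_smul_add_const hanti hC hCA hCB hq
  refine ⟨m, -α * μ, hm, by nlinarith, fun i => ?_⟩
  have hdiag : Q i i = 0 := by rw [hQ, sub_self, zero_mul]
  rw [sum_erase_mul_mul_eq_mul_mulVec hdiag,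
    mulVec_eq_smul_sub_centerOfMass hanti (sum_pos (fun k _ => hm k) univ_nonempty).ne' hd i,
    centerOfMass]
  ring
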